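/- arXiv:2412.19047 — 5 statements merged into one kernel-verified Lean document; each statement's English description precedes it below -/
import Mathlib

section
/- Suppose H is a Hilbert space of complex-valued functions on a set T and φ : E → H with φ(t,x) := φ(x)(t). If for every t ∈ T the function x ↦ conj(φ(t,x)) belongs to the RKHS Ĥ = φ̂(H) and the inversion formula f(t) = ⟨f̂, conj(φ(t,·))⟩_{Ĥ} holds for all f in the closed linear span of φ(E), then the closed subspace cspan φ(E) of H is an RKHS on T (i.e., point evaluations on cspan φ(E) are bounded). -/
/-! Each `φ x` is orthogonal to `ker Φ`, because `⟪φ x, k⟫` is the value at `x` of `ι (Φ k)`.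
Hence the closed span of `φ(E)` lies in `(ker Φ)ᗮ`, where the coisometry `Φ` is isometric, and
the inversion formula together with Cauchy–Schwarz gives `|f t| ≤ ‖g‖ ‖Φ f‖ = ‖g‖ ‖f‖`. -/

section

variable {𝕜 H W E : Type*} [RCLike 𝕜] [NormedAddCommGroup H] [InnerProductSpace 𝕜 H]
  [AddCommGroup W] [Module 𝕜 W]

theorem mem_orthogonal_ker_of_apply_eq_inner (φ : E → H) (ι : W →ₗ[𝕜] (E → 𝕜))
    (Φ : H →ₗ[𝕜] W) (hΦ : ∀ (f : H) (x : E), ι (Φ f) x = inner 𝕜 (φ x) f) (x : E) :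
    φ x ∈ (LinearMap.ker Φ)ᗮ := by
  rw [Submodule.mem_orthogonal']
  intro k hk
  rw [← hΦ, LinearMap.mem_ker.mp hk, map_zero, Pi.zero_apply]

theorem topologicalClosure_span_range_le_orthogonal_ker (φ : E → H) (ι : W →ₗ[𝕜] (E → 𝕜))
    (Φ : H →ₗ[𝕜] W) (hΦ : ∀ (f : H) (x : E), ι (Φ f) x = inner 𝕜 (φ x) f) :
    (Submodule.span 𝕜 (Set.range φ)).topologicalClosure ≤ (LinearMap.ker Φ)ᗮ := by
  refine Submodule.topologicalClosure_minimal _ ?_ (Submodule.isClosed_orthogonal _)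
  rw [Submodule.span_le, Set.range_subset_iff]
  exact mem_orthogonal_ker_of_apply_eq_inner φ ι Φ hΦ

end

theorem stmt4_general {H : Type*} [NormedAddCommGroup H] [InnerProductSpace ℂ H]
    {W : Type*} [NormedAddCommGroup W] [InnerProductSpace ℂ W]
    {E T : Type*} (φ : E → H)
    (evT : H →ₗ[ℂ] (T → ℂ))
    (ι : W →ₗ[ℂ] (E → ℂ))
    (Φ : H →ₗ[ℂ] W)
    (hΦ : ∀ (f : H) (x : E), ι (Φ f) x = (inner ℂ (φ x) f : ℂ))
    (hco : ∀ f ∈ (LinearMap.ker Φ)ᗮ, ‖Φ f‖ = ‖f‖)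
    (hinv : ∀ t : T, ∃ g : W,
      (∀ x : E, ι g x = (starRingEnd ℂ) (evT (φ x) t)) ∧
      (∀ f ∈ (Submodule.span ℂ (Set.range φ)).topologicalClosure,
        evT f t = (inner ℂ g (Φ f) : ℂ))) :
    ∀ t : T, ∃ C : ℝ,
      ∀ f ∈ (Submodule.span ℂ (Set.range φ)).topologicalClosure,
        ‖evT f t‖ ≤ C * ‖f‖ := by
  intro t
  obtain ⟨g, -, hg⟩ := hinv t
  refine ⟨‖g‖, fun f hf => ?_⟩
  have hf_perp := topologicalClosure_span_range_le_orthogonal_ker φ ι Φ hΦ hf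
  calc ‖evT f t‖ = ‖(inner ℂ g (Φ f) : ℂ)‖ := by rw [hg f hf]
    _ ≤ ‖g‖ * ‖Φ f‖ := norm_inner_le_norm _ _
    _ = ‖g‖ * ‖f‖ := by rw [hco f hf_perp]

theorem stmt4 {H : Type*} [NormedAddCommGroup H] [InnerProductSpace ℂ H] [CompleteSpace H]
    {W : Type*} [NormedAddCommGroup W] [InnerProductSpace ℂ W] [CompleteSpace W]
    {E T : Type*} (φ : E → H)
    (evT : H →ₗ[ℂ] (T → ℂ)) (hevT : Function.Injective evT)
    (ι : W →ₗ[ℂ] (E → ℂ)) (hι : Function.Injective ι)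
    (Φ : H →ₗ[ℂ] W)
    (hΦ : ∀ (f : H) (x : E), ι (Φ f) x = (inner ℂ (φ x) f : ℂ))
    (hsurj : Function.Surjective Φ)
    (hco : ∀ f ∈ (LinearMap.ker Φ)ᗮ, ‖Φ f‖ = ‖f‖)
    (hinv : ∀ t : T, ∃ g : W,
      (∀ x : E, ι g x = (starRingEnd ℂ) (evT (φ x) t)) ∧
      (∀ f ∈ (Submodule.span ℂ (Set.range φ)).topologicalClosure,
        evT f t = (inner ℂ g (Φ f) : ℂ))) :
    ∀ t : T, ∃ C : ℝ,
      ∀ f ∈ (Submodule.span ℂ (Set.range φ)).topologicalClosure,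
        ‖evT f t‖ ≤ C * ‖f‖ :=
  stmt4_general φ evT ι Φ hΦ hco hinv
end

section
/- Suppose H is a Hilbert space of complex-valued functions on a set T and φ : E → H with φ(t,x) := φ(x)(t). If the closed linear span of φ(E) is an RKHS on T (point evaluations are bounded on it), then for every t ∈ T the function x ↦ conj(φ(t,x)) lies in Ĥ = φ̂(H), and for every f in the closed linear span of φ(E) and every t ∈ T, f(t) = ⟨f̂, conj(φ(t,·))⟩_{Ĥ}. -/
/-!
Since `ι ∘ Φ = φ̂` with `ι` injective, `ker Φ = (span φ(E))ᗮ`, so `Φ` is isometric on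
`(ker Φ)ᗮ = cspan φ(E)`. Bounded evaluation at `t` on `cspan φ(E)` has a Riesz representer `k_t`
there; then `Φ k_t = conj φ(t,·)`, and `⟪Φ k_t, Φ f⟫ = ⟪k_t, f⟫ = f t` on `cspan φ(E)`.
-/

open Submodule

section
variable {𝕜 H : Type*} [RCLike 𝕜] [NormedAddCommGroup H] [InnerProductSpace 𝕜 H]

theorem Submodule.mem_orthogonal_span_range_iff {E : Type*} (φ : E → H) (f : H) :
    f ∈ (span 𝕜 (Set.range φ))ᗮ ↔ ∀ x, inner 𝕜 (φ x) f = 0 := by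
  simp_rw [span_range_eq_iSup, ← iInf_orthogonal, mem_iInf,
    mem_orthogonal_singleton_iff_inner_right]

theorem ker_eq_orthogonal_span_range {E W : Type*} [AddCommGroup W] [Module 𝕜 W] (φ : E → H)
    {ι : W →ₗ[𝕜] (E → 𝕜)} (hι : Function.Injective ι) {Φ : H →ₗ[𝕜] W}
    (hΦ : ∀ (f : H) (x : E), ι (Φ f) x = inner 𝕜 (φ x) f) :
    LinearMap.ker Φ = (span 𝕜 (Set.range φ))ᗮ := by
  ext f
  rw [LinearMap.mem_ker, mem_orthogonal_span_range_iff, ← (injective_iff_map_eq_zero' ι).1 hι,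
    funext_iff]
  simp only [hΦ, Pi.zero_apply]

theorem orthogonal_ker_eq_closure_span_range [CompleteSpace H] {E W : Type*} [AddCommGroup W]
    [Module 𝕜 W] (φ : E → H) {ι : W →ₗ[𝕜] (E → 𝕜)} (hι : Function.Injective ι)
    {Φ : H →ₗ[𝕜] W} (hΦ : ∀ (f : H) (x : E), ι (Φ f) x = inner 𝕜 (φ x) f) :
    (LinearMap.ker Φ)ᗮ = (span 𝕜 (Set.range φ)).topologicalClosure := by
  rw [ker_eq_orthogonal_span_range φ hι hΦ, orthogonal_orthogonal_eq_closure]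

theorem exists_inner_eq_of_norm_le_on (S : Submodule 𝕜 H) [CompleteSpace S] (ℓ : H →ₗ[𝕜] 𝕜)
    (C : ℝ) (hC : ∀ f ∈ S, ‖ℓ f‖ ≤ C * ‖f‖) : ∃ k ∈ S, ∀ f ∈ S, inner 𝕜 k f = ℓ f := by
  let L : S →L[𝕜] 𝕜 := (ℓ ∘ₗ S.subtype).mkContinuous C fun f => hC f f.2
  exact ⟨(InnerProductSpace.toDual 𝕜 S).symm L, coe_mem _, fun f hf =>
    InnerProductSpace.toDual_symm_apply (x := ⟨f, hf⟩) (y := L)⟩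

theorem inner_map_map_of_norm_map_on {W : Type*} [NormedAddCommGroup W] [InnerProductSpace 𝕜 W]
    (Φ : H →ₗ[𝕜] W) (K : Submodule 𝕜 H) (hK : ∀ f ∈ K, ‖Φ f‖ = ‖f‖) {a b : H} (ha : a ∈ K)
    (hb : b ∈ K) : inner 𝕜 (Φ a) (Φ b) = inner 𝕜 a b :=
  (⟨Φ ∘ₗ K.subtype, fun f => hK f f.2⟩ : K →ₗᵢ[𝕜] W).inner_map_map ⟨a, ha⟩ ⟨b, hb⟩

end

theorem stmt5_general {H : Type*} [NormedAddCommGroup H] [InnerProductSpace ℂ H] [CompleteSpace H]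
    {W : Type*} [NormedAddCommGroup W] [InnerProductSpace ℂ W]
    {E T : Type*} (φ : E → H)
    (evT : H →ₗ[ℂ] (T → ℂ))
    (ι : W →ₗ[ℂ] (E → ℂ)) (hι : Function.Injective ι)
    (Φ : H →ₗ[ℂ] W)
    (hΦ : ∀ (f : H) (x : E), ι (Φ f) x = (inner ℂ (φ x) f : ℂ))
    (hco : ∀ f ∈ (LinearMap.ker Φ)ᗮ, ‖Φ f‖ = ‖f‖)
    (hRKHS : ∀ t : T, ∃ C : ℝ,
      ∀ f ∈ (Submodule.span ℂ (Set.range φ)).topologicalClosure,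
        ‖evT f t‖ ≤ C * ‖f‖) :
    ∀ t : T, ∃ g : W,
      (∀ x : E, ι g x = (starRingEnd ℂ) (evT (φ x) t)) ∧
      (∀ f ∈ (Submodule.span ℂ (Set.range φ)).topologicalClosure,
        evT f t = (inner ℂ g (Φ f) : ℂ)) := by
  intro t
  set S := (span ℂ (Set.range φ)).topologicalClosure
  have hKS : (LinearMap.ker Φ)ᗮ = S := orthogonal_ker_eq_closure_span_range φ hι hΦ
  have : CompleteSpace S := (isClosed_topologicalClosure _).completeSpace_coe
  obtain ⟨C, hC⟩ := hRKHS t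
  obtain ⟨k, hkS, hk⟩ := exists_inner_eq_of_norm_le_on S (LinearMap.proj t ∘ₗ evT) C hC
  have hφS : ∀ x, φ x ∈ S := fun x => le_topologicalClosure _ (subset_span ⟨x, rfl⟩)
  refine ⟨Φ k, fun x => ?_, fun f hf => ?_⟩
  · rw [hΦ, ← inner_conj_symm, hk _ (hφS x)]
    rfl
  · rw [inner_map_map_of_norm_map_on Φ _ hco (hKS ▸ hkS) (hKS ▸ hf)]
    exact (hk f hf).symm

theorem stmt5 {H : Type*} [NormedAddCommGroup H] [InnerProductSpace ℂ H] [CompleteSpace H]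
    {W : Type*} [NormedAddCommGroup W] [InnerProductSpace ℂ W] [CompleteSpace W]
    {E T : Type*} (φ : E → H)
    (evT : H →ₗ[ℂ] (T → ℂ)) (hevT : Function.Injective evT)
    (ι : W →ₗ[ℂ] (E → ℂ)) (hι : Function.Injective ι)
    (Φ : H →ₗ[ℂ] W)
    (hΦ : ∀ (f : H) (x : E), ι (Φ f) x = (inner ℂ (φ x) f : ℂ))
    (hsurj : Function.Surjective Φ)
    (hco : ∀ f ∈ (LinearMap.ker Φ)ᗮ, ‖Φ f‖ = ‖f‖)
    (hRKHS : ∀ t : T, ∃ C : ℝ,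
      ∀ f ∈ (Submodule.span ℂ (Set.range φ)).topologicalClosure,
        ‖evT f t‖ ≤ C * ‖f‖) :
    ∀ t : T, ∃ g : W,
      (∀ x : E, ι g x = (starRingEnd ℂ) (evT (φ x) t)) ∧
      (∀ f ∈ (Submodule.span ℂ (Set.range φ)).topologicalClosure,
        evT f t = (inner ℂ g (Φ f) : ℂ)) :=
  stmt5_general φ evT ι hι Φ hΦ hco hRKHS
end

section
/- Let H be an RKHS on E with kernel k and kernel functions k_y = k(·,y), let F ⊆ E be a uniqueness set for H (f ∈ H and f|_F = 0 imply f = 0), and suppose T : {k_x : x ∈ F} → K is a map into a Hilbert space K with k(x,y) = ⟨T k_y, T k_x⟩_K for all x,y ∈ F. Then T extends uniquely to a linear isometry from H into K; in particular H is isometrically isomorphic to a closed subspace of K. -/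
/-!
The Gram identity `⟪T x, T y⟫ = k(x, y) = ⟪k x, k y⟫` makes `∑ cᵢ k xᵢ ↦ ∑ cᵢ T xᵢ` a well-defined
norm-preserving linear map on the span of the kernel functions at points of `F`. That span is dense,
because a function orthogonal to all of them vanishes on `F`, hence is zero; so the map extends by
continuity to an isometry of `H`, and continuity also forces uniqueness.
-/

open Finsupp

section

variable {𝕜 ι H K : Type*} [RCLike 𝕜]
  [NormedAddCommGroup H] [InnerProductSpace 𝕜 H] [NormedAddCommGroup K] [InnerProductSpace 𝕜 K]

local notation "⟪" x ", " y "⟫" => inner 𝕜 x y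

theorem inner_linearCombination_linearCombination (v : ι → H) (c d : ι →₀ 𝕜) :
    ⟪linearCombination 𝕜 v c, linearCombination 𝕜 v d⟫ =
      d.sum fun j b => b * c.sum fun i a => (starRingEnd 𝕜) a * ⟪v i, v j⟫ := by
  simp only [linearCombination_apply, Finsupp.sum_inner, Finsupp.inner_sum, inner_smul_left,
    inner_smul_right]

theorem norm_linearCombination_eq_of_inner_eq {v : ι → H} {w : ι → K}
    (hvw : ∀ i j, ⟪w i, w j⟫ = ⟪v i, v j⟫) (c : ι →₀ 𝕜) :
    ‖linearCombination 𝕜 w c‖ = ‖linearCombination 𝕜 v c‖ := by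
  rw [@norm_eq_sqrt_re_inner 𝕜, @norm_eq_sqrt_re_inner 𝕜,
    inner_linearCombination_linearCombination, inner_linearCombination_linearCombination]
  simp only [hvw]

theorem denseRange_linearCombination_of_inner_eq_zero [CompleteSpace H] {v : ι → H}
    (hv : ∀ f : H, (∀ i, ⟪v i, f⟫ = 0) → f = 0) :
    DenseRange (linearCombination 𝕜 v) := by
  rw [DenseRange, ← LinearMap.coe_range, range_linearCombination,
    Submodule.dense_iff_topologicalClosure_eq_top, Submodule.topologicalClosure_eq_top_iff,
    Submodule.eq_bot_iff]
  exact fun f hf ↦ hv f fun i ↦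
    (Submodule.mem_orthogonal _ f).1 hf _ (Submodule.subset_span (Set.mem_range_self i))

variable [CompleteSpace K]

theorem existsUnique_linearIsometry_map_eq_of_inner_eq {v : ι → H} {w : ι → K}
    (hv : DenseRange (linearCombination 𝕜 v)) (hvw : ∀ i j, ⟪w i, w j⟫ = ⟪v i, v j⟫) :
    ∃! L : H →ₗᵢ[𝕜] K, ∀ i, L (v i) = w i := by
  have hnorm := norm_linearCombination_eq_of_inner_eq hvw
  have hbound : ∃ C, ∀ c, ‖linearCombination 𝕜 w c‖ ≤ C * ‖linearCombination 𝕜 v c‖ :=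
    ⟨1, fun c ↦ by rw [hnorm, one_mul]⟩
  set L := (linearCombination 𝕜 w).extendOfNorm (linearCombination 𝕜 v)
  have hL (c : ι →₀ 𝕜) : L (linearCombination 𝕜 v c) = linearCombination 𝕜 w c :=
    LinearMap.extendOfNorm_eq hv hbound c
  have hLnorm (f : H) : ‖L f‖ = ‖f‖ := by
    refine hv.induction_on f (isClosed_eq (by fun_prop) continuous_norm) fun c ↦ ?_
    rw [hL, hnorm]
  refine ⟨⟨L.toLinearMap, hLnorm⟩, fun i ↦ by simpa using hL (single i 1), fun L' hL' ↦ ?_⟩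
  have : ⇑L' = L := hv.equalizer L'.continuous L.continuous <| funext fun c ↦ by
    rw [Function.comp_apply, Function.comp_apply, hL, ← funext hL']
    exact apply_linearCombination 𝕜 L'.toLinearMap v c
  exact LinearIsometry.ext (congrFun this)

end

theorem stmt6_general {H : Type*} [NormedAddCommGroup H] [InnerProductSpace ℂ H] [CompleteSpace H]
    {K : Type*} [NormedAddCommGroup K] [InnerProductSpace ℂ K] [CompleteSpace K]
    {E : Type*} (ev : H →ₗ[ℂ] (E → ℂ))
    (k : E → H) (hk : ∀ (f : H) (x : E), ev f x = (inner ℂ (k x) f : ℂ))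
    (F : Set E)
    (huniq : ∀ f : H, (∀ x ∈ F, ev f x = 0) → f = 0)
    (T : E → K)
    (hT : ∀ x ∈ F, ∀ y ∈ F, ev (k y) x = (inner ℂ (T x) (T y) : ℂ)) :
    ∃! L : H →ₗᵢ[ℂ] K, ∀ x ∈ F, L (k x) = T x := by
  have hdense : DenseRange (linearCombination ℂ fun x : F ↦ k x) :=
    denseRange_linearCombination_of_inner_eq_zero fun f hf ↦
      huniq f fun x hx ↦ (hk f x).trans (hf ⟨x, hx⟩)
  have hgram (x y : F) : inner ℂ (T x) (T y) = inner ℂ (k x) (k y) := by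
    rw [← hT x x.2 y y.2, hk]
  simpa only [Subtype.forall] using existsUnique_linearIsometry_map_eq_of_inner_eq hdense hgram

theorem stmt6 {H : Type*} [NormedAddCommGroup H] [InnerProductSpace ℂ H] [CompleteSpace H]
    {K : Type*} [NormedAddCommGroup K] [InnerProductSpace ℂ K] [CompleteSpace K]
    {E : Type*} (ev : H →ₗ[ℂ] (E → ℂ)) (hev : Function.Injective ev)
    (k : E → H) (hk : ∀ (f : H) (x : E), ev f x = (inner ℂ (k x) f : ℂ))
    (F : Set E)
    (huniq : ∀ f : H, (∀ x ∈ F, ev f x = 0) → f = 0)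
    (T : E → K)
    (hT : ∀ x ∈ F, ∀ y ∈ F, ev (k y) x = (inner ℂ (T x) (T y) : ℂ)) :
    ∃! L : H →ₗᵢ[ℂ] K, ∀ x ∈ F, L (k x) = T x :=
  stmt6_general ev k hk F huniq T hT
end

section
/- Let I = (a,b) ⊆ ℝ be an open interval, c ∈ [a,b], and ρ a positive measurable weight on I with 1/ρ integrable on (c,x) for every x ∈ I. Then the Sobolev-type space H_{c,ρ}(I) = {f absolutely continuous on I : f(c) = 0, f' ∈ L²_ρ(I)} with inner product ⟨f,g⟩ = ∫ f' conj(g') ρ dt is an RKHS on I ∪ {c}, and its reproducing kernel is k(x,y) = ∫_{(c, med{x,y,c})} ρ(t)^{-1} dt, where med denotes the median of three extended reals. -/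
/-!
For `f ∈ H_{c,ρ}(I)` we have `f y = ∫_c^y f'`, and `k_y' ρ = ±χ_{(c,y)}`, so this is
`∫_I f' conj(k_y') ρ` once one knows that `(c,y)` lies in `I` up to an endpoint. The kernel
function `k_y` is the primitive of `k_y'` because `(c,x) ∩ (c,y) = (c, med{x,y,c})`.
Boundedness of evaluation is the weighted Cauchy–Schwarz inequality
`|∫_{(c,y)} g|² ≤ ∫ |g|² ρ · ∫ ρ⁻¹`, read off from the discriminant of the nonnegative
quadratic `x ↦ ∫ ρ⁻¹ (x |g| ρ - 1)²`.
-/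

open MeasureTheory Set intervalIntegral

noncomputable def median3 (x y z : ℝ) : ℝ := max (min x y) (min (max x y) z)

open scoped ComplexConjugate

theorem uIoc_inter_uIoc_eq_uIoc_median3 (c x y : ℝ) :
    uIoc c x ∩ uIoc c y = uIoc c (median3 x y c) := by
  ext t
  simp only [mem_inter_iff, mem_uIoc, median3]
  grind

theorem volume_preimage_coe_Icc_sdiff_Ioo (a b : EReal) :
    volume (((↑) : ℝ → EReal) ⁻¹' Icc a b \ (↑) ⁻¹' Ioo a b) = 0 := by
  have hsub : Icc a b \ Ioo a b ⊆ {a, b} := fun t ht => by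
    simp only [mem_sdiff, mem_Icc, mem_Ioo] at ht
    simp only [mem_insert_iff, mem_singleton_iff]
    grind
  rw [← preimage_sdiff]
  exact measure_mono_null (preimage_mono hsub)
    ((((finite_singleton b).insert a).preimage EReal.coe_injective.injOn).measure_zero volume)

theorem uIoc_ae_le_preimage_coe_Ioo {a b : EReal} {x y : ℝ} (hx : (x : EReal) ∈ Icc a b)
    (hy : (y : EReal) ∈ Icc a b) : uIoc x y ≤ᵐ[volume] ((↑) ⁻¹' Ioo a b : Set ℝ) := by
  have hsub : uIoc x y ⊆ ((↑) ⁻¹' Icc a b : Set ℝ) :=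
    uIoc_subset_uIcc.trans <|
      (ordConnected_Icc.preimage_mono EReal.coe_strictMono.monotone).uIcc_subset hx hy
  exact ae_le_set.2 <|
    measure_mono_null (sdiff_subset_sdiff_left hsub) (volume_preimage_coe_Icc_sdiff_Ioo a b)

noncomputable def sobolevKernel (ρ : ℝ → ℝ) (c x y : ℝ) : ℝ :=
  ∫ t in uIoc c (median3 x y c), (ρ t)⁻¹

noncomputable def kernelDeriv (ρ : ℝ → ℝ) (c y : ℝ) : ℝ → ℂ :=
  (uIoc c y).indicator fun t => if c ≤ y then (((ρ t)⁻¹ : ℝ) : ℂ) else -(((ρ t)⁻¹ : ℝ) : ℂ)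

theorem intervalIntegral_kernelDeriv (ρ : ℝ → ℝ) (c x y : ℝ) :
    ∫ t in c..x, kernelDeriv ρ c y t = sobolevKernel ρ c x y := by
  rw [intervalIntegral_eq_integral_uIoc, kernelDeriv, setIntegral_indicator measurableSet_uIoc,
    uIoc_inter_uIoc_eq_uIoc_median3, sobolevKernel, ← integral_complex_ofReal]
  have hmedian : ¬(c ≤ x ↔ c ≤ y) → median3 x y c = c := by
    simp only [median3]; grind
  by_cases hx : c ≤ x <;> by_cases hy : c ≤ y <;>
    simp [hx, hy, MeasureTheory.integral_neg, hmedian]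

section KernelDeriv

variable {ρ : ℝ → ℝ} {c y : ℝ}

theorem integrable_kernelDeriv (h : IntegrableOn (fun t => (ρ t)⁻¹) (uIoc c y)) :
    Integrable (kernelDeriv ρ c y) := by
  rw [kernelDeriv, integrable_indicator_iff measurableSet_uIoc]
  have h' : IntegrableOn (fun t => (((ρ t)⁻¹ : ℝ) : ℂ)) (uIoc c y) := h.ofReal
  split_ifs
  exacts [h', h'.neg]

theorem norm_kernelDeriv_sq_mul {t : ℝ} (ht : 0 < ρ t) :
    ‖kernelDeriv ρ c y t‖ ^ 2 * ρ t = ‖kernelDeriv ρ c y t‖ := by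
  by_cases hts : t ∈ uIoc c y
  · simp only [kernelDeriv, indicator_of_mem hts]
    split_ifs <;>
      simp only [Complex.ofReal_inv, norm_neg, norm_inv, Complex.norm_real, Real.norm_eq_abs,
        abs_of_pos ht, inv_pow] <;>
      field_simp
  · simp [kernelDeriv, indicator_of_notMem hts]

theorem mul_conj_kernelDeriv_mul (g : ℝ → ℂ) {t : ℝ} (ht : ρ t ≠ 0) :
    g t * conj (kernelDeriv ρ c y t) * ρ t =
      (uIoc c y).indicator (fun t => (if c ≤ y then (1 : ℝ) else -1) • g t) t := by
  by_cases hts : t ∈ uIoc c y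
  · have ht' : (ρ t : ℂ) ≠ 0 := Complex.ofReal_ne_zero.2 ht
    simp only [kernelDeriv, indicator_of_mem hts]
    split_ifs <;>
      simp only [Complex.ofReal_inv, map_neg, map_inv₀, Complex.conj_ofReal, mul_neg, neg_mul,
        neg_smul, one_smul] <;>
      field_simp
  · simp [kernelDeriv, indicator_of_notMem hts]

end KernelDeriv

theorem sq_integral_le_integral_sq_mul_mul_integral_inv {α : Type*} [MeasurableSpace α]
    {μ : Measure α} {u w : α → ℝ} (hw : ∀ᵐ t ∂μ, 0 < w t)
    (hu : Integrable (fun t => u t ^ 2 * w t) μ) (hw' : Integrable (fun t => (w t)⁻¹) μ) :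
    (∫ t, u t ∂μ) ^ 2 ≤ (∫ t, u t ^ 2 * w t ∂μ) * ∫ t, (w t)⁻¹ ∂μ := by
  have hA : 0 ≤ ∫ t, u t ^ 2 * w t ∂μ :=
    integral_nonneg_of_ae (hw.mono fun t ht => by positivity)
  have hB : 0 ≤ ∫ t, (w t)⁻¹ ∂μ := integral_nonneg_of_ae (hw.mono fun t ht => by positivity)
  by_cases hui : Integrable u μ
  swap
  · rw [integral_undef hui]
    simpa using mul_nonneg hA hB
  -- integrating `0 ≤ w⁻¹ (x u w - 1)²` gives a quadratic in `x` that is nonnegative everywhere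
  have hquad : ∀ x : ℝ, 0 ≤ (∫ t, u t ^ 2 * w t ∂μ) * (x * x) + (-2 * ∫ t, u t ∂μ) * x
      + ∫ t, (w t)⁻¹ ∂μ := by
    intro x
    have hle : ∫ t, 2 * x * u t ∂μ ≤ ∫ t, x * x * (u t ^ 2 * w t) + (w t)⁻¹ ∂μ := by
      refine integral_mono_ae (hui.const_mul _) ((hu.const_mul _).add hw') ?_
      filter_upwards [hw] with t ht
      have hsq : (w t)⁻¹ * (x * u t * w t - 1) ^ 2 =
          x * x * (u t ^ 2 * w t) + (w t)⁻¹ - 2 * x * u t := by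
        field_simp
        ring
      linarith [mul_nonneg (inv_nonneg.2 ht.le) (sq_nonneg (x * u t * w t - 1))]
    rw [MeasureTheory.integral_const_mul, integral_add (hu.const_mul _) hw',
      MeasureTheory.integral_const_mul] at hle
    linarith
  have hdiscrim := discrim_le_zero hquad
  rw [discrim] at hdiscrim
  linarith

/-- `f ∈ H_{c,ρ}(I)` with derivative `f' = g`. -/
def IsWeightedL2Primitive (ρ : ℝ → ℝ) (I : Set ℝ) (c : ℝ) (f g : ℝ → ℂ) : Prop :=
  AEStronglyMeasurable g (volume.restrict I) ∧ IntegrableOn (fun t => ‖g t‖ ^ 2 * ρ t) I ∧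
    ∀ x ∈ insert c I, f x = ∫ t in c..x, g t

section WeightedL2Primitive

variable {ρ : ℝ → ℝ} {I : Set ℝ} {c y : ℝ}

theorem isWeightedL2Primitive_sobolevKernel (hI : MeasurableSet I) (hρ : ∀ t ∈ I, 0 < ρ t)
    (hy : IntegrableOn (fun t => (ρ t)⁻¹) (uIoc c y)) :
    IsWeightedL2Primitive ρ I c (fun x => sobolevKernel ρ c x y) (kernelDeriv ρ c y) := by
  have hk := integrable_kernelDeriv hy
  refine ⟨hk.aestronglyMeasurable.restrict, ?_,
    fun x _ => (intervalIntegral_kernelDeriv ρ c x y).symm⟩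
  exact hk.norm.integrableOn.congr_fun (fun t ht => (norm_kernelDeriv_sq_mul (hρ t ht)).symm) hI

theorem IsWeightedL2Primitive.eq_integral_mul_conj_kernelDeriv {f g : ℝ → ℂ}
    (hfg : IsWeightedL2Primitive ρ I c f g) (hI : MeasurableSet I) (hρ : ∀ t ∈ I, ρ t ≠ 0)
    (hS : uIoc c y ≤ᵐ[volume] I) (hy : y ∈ insert c I) :
    f y = ∫ t in I, g t * conj (kernelDeriv ρ c y t) * ρ t := by
  have hIS : (I ∩ uIoc c y : Set ℝ) =ᵐ[volume] uIoc c y :=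
    inter_subset_right.eventuallyLE.antisymm <| by
      simpa using ae_le_set_inter hS (Filter.EventuallyLE.refl _ (uIoc c y))
  rw [hfg.2.2 y hy, setIntegral_congr_fun hI fun t ht => mul_conj_kernelDeriv_mul g (hρ t ht),
    setIntegral_indicator measurableSet_uIoc, setIntegral_congr_set hIS,
    MeasureTheory.integral_smul, intervalIntegral_eq_integral_uIoc]

theorem IsWeightedL2Primitive.norm_sq_le {f g : ℝ → ℂ}
    (hfg : IsWeightedL2Primitive ρ I c f g) (hI : MeasurableSet I) (hρ : ∀ t ∈ I, 0 < ρ t)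
    (hS : uIoc c y ≤ᵐ[volume] I) (hρy : IntegrableOn (fun t => (ρ t)⁻¹) (uIoc c y))
    (hy : y ∈ insert c I) :
    ‖f y‖ ^ 2 ≤ (∫ t in uIoc c y, (ρ t)⁻¹) * ∫ t in I, ‖g t‖ ^ 2 * ρ t := by
  obtain ⟨-, hg, hf⟩ := hfg
  have hρS : ∀ᵐ t ∂volume.restrict (uIoc c y), 0 < ρ t :=
    (ae_restrict_iff' measurableSet_uIoc).2 (hS.mono fun t ht hts => hρ t (ht hts))
  calc ‖f y‖ ^ 2 ≤ (∫ t in uIoc c y, ‖g t‖) ^ 2 := by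
        rw [hf y hy]
        exact pow_le_pow_left₀ (norm_nonneg _) (norm_integral_le_integral_norm_uIoc) 2
    _ ≤ (∫ t in uIoc c y, ‖g t‖ ^ 2 * ρ t) * ∫ t in uIoc c y, (ρ t)⁻¹ :=
        sq_integral_le_integral_sq_mul_mul_integral_inv hρS (hg.mono_set_ae hS) hρy
    _ ≤ (∫ t in I, ‖g t‖ ^ 2 * ρ t) * ∫ t in uIoc c y, (ρ t)⁻¹ := by
        gcongr ?_ * _
        · exact integral_nonneg_of_ae (hρS.mono fun t ht => by positivity)
        · exact setIntegral_mono_set hg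
            (ae_restrict_of_forall_mem hI fun t ht => by have := hρ t ht; positivity) hS
    _ = _ := mul_comm _ _

end WeightedL2Primitive

theorem stmt7_general (a b : EReal) (c : ℝ)
    (hca : a ≤ (c : EReal)) (hcb : (c : EReal) ≤ b)
    (ρ : ℝ → ℝ)
    (I : Set ℝ) (hI : I = {x : ℝ | a < (x : EReal) ∧ (x : EReal) < b})
    (hρpos : ∀ t ∈ I, 0 < ρ t)
    (hρint : ∀ x ∈ I, IntegrableOn (fun t => (ρ t)⁻¹) (Set.uIoc c x))
    -- membership in `H_{c,ρ}(I)`: `f` is the indefinite integral from `c` of `g ∈ L²_ρ(I)`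
    (InH : (ℝ → ℂ) → (ℝ → ℂ) → Prop)
    (hInH : ∀ f g, InH f g ↔
      (AEStronglyMeasurable g (volume.restrict I) ∧
       IntegrableOn (fun t => ‖g t‖ ^ 2 * ρ t) I ∧
       ∀ x ∈ insert c I, f x = ∫ t in c..x, g t))
    -- the kernel function `k_y` and its derivative `±χ_{(c,y)}/ρ`
    (kfun : ℝ → ℝ → ℂ)
    (hkfun : ∀ y x, kfun y x = ((∫ t in Set.uIoc c (median3 x y c), (ρ t)⁻¹ : ℝ) : ℂ))
    (kder : ℝ → ℝ → ℂ)
    (hkder : ∀ y t, kder y t =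
      (Set.uIoc c y).indicator
        (fun t => if c ≤ y then (((ρ t)⁻¹ : ℝ) : ℂ) else -(((ρ t)⁻¹ : ℝ) : ℂ)) t) :
    -- (1) each kernel function belongs to `H_{c,ρ}(I)`
    (∀ y ∈ insert c I, InH (kfun y) (kder y)) ∧
    -- (2) reproducing property: `f y = ⟨f, k_y⟩`
    (∀ f g, InH f g → ∀ y ∈ insert c I,
      f y = ∫ t in I, g t * (starRingEnd ℂ) (kder y t) * (ρ t : ℂ)) ∧
    -- (3) point evaluations are bounded: `H_{c,ρ}(I)` is an RKHS on `I ∪ {c}`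
    (∀ y ∈ insert c I, ∃ C : ℝ, ∀ f g, InH f g →
      ‖f y‖ ^ 2 ≤ C * ∫ t in I, ‖g t‖ ^ 2 * ρ t) := by
  obtain rfl : InH = IsWeightedL2Primitive ρ I c := by ext f g; exact hInH f g
  obtain rfl : kfun = fun y x => (sobolevKernel ρ c x y : ℂ) := by ext y x; exact hkfun y x
  obtain rfl : kder = kernelDeriv ρ c := by ext y t; exact hkder y t
  replace hI : I = ((↑) ⁻¹' Ioo a b : Set ℝ) := hI
  have hImeas : MeasurableSet I := hI ▸ measurable_coe_real_ereal measurableSet_Ioo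
  have hS : ∀ y ∈ insert c I, uIoc c y ≤ᵐ[volume] I := by
    subst hI
    rintro y (rfl | ⟨hay, hyb⟩)
    exacts [uIoc_ae_le_preimage_coe_Ioo ⟨hca, hcb⟩ ⟨hca, hcb⟩,
      uIoc_ae_le_preimage_coe_Ioo ⟨hca, hcb⟩ ⟨hay.le, hyb.le⟩]
  have hρy : ∀ y ∈ insert c I, IntegrableOn (fun t => (ρ t)⁻¹) (uIoc c y) := by
    rintro y (rfl | hy)
    exacts [by simp, hρint y hy]
  refine ⟨fun y hy => isWeightedL2Primitive_sobolevKernel hImeas hρpos (hρy y hy),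
    fun f g hfg y hy =>
      hfg.eq_integral_mul_conj_kernelDeriv hImeas (fun t ht => (hρpos t ht).ne') (hS y hy) hy,
    fun y hy => ⟨_, fun f g hfg => hfg.norm_sq_le hImeas hρpos (hS y hy) (hρy y hy) hy⟩⟩

theorem stmt7 (a b : EReal) (hab : a < b) (c : ℝ)
    (hca : a ≤ (c : EReal)) (hcb : (c : EReal) ≤ b)
    (ρ : ℝ → ℝ)
    (I : Set ℝ) (hI : I = {x : ℝ | a < (x : EReal) ∧ (x : EReal) < b})
    (hρpos : ∀ t ∈ I, 0 < ρ t) (hρmeas : Measurable ρ)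
    (hρint : ∀ x ∈ I, IntegrableOn (fun t => (ρ t)⁻¹) (Set.uIoc c x))
    -- membership in `H_{c,ρ}(I)`: `f` is the indefinite integral from `c` of `g ∈ L²_ρ(I)`
    (InH : (ℝ → ℂ) → (ℝ → ℂ) → Prop)
    (hInH : ∀ f g, InH f g ↔
      (AEStronglyMeasurable g (volume.restrict I) ∧
       IntegrableOn (fun t => ‖g t‖ ^ 2 * ρ t) I ∧
       ∀ x ∈ insert c I, f x = ∫ t in c..x, g t))
    -- the kernel function `k_y` and its derivative `±χ_{(c,y)}/ρ`
    (kfun : ℝ → ℝ → ℂ)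
    (hkfun : ∀ y x, kfun y x = ((∫ t in Set.uIoc c (median3 x y c), (ρ t)⁻¹ : ℝ) : ℂ))
    (kder : ℝ → ℝ → ℂ)
    (hkder : ∀ y t, kder y t =
      (Set.uIoc c y).indicator
        (fun t => if c ≤ y then (((ρ t)⁻¹ : ℝ) : ℂ) else -(((ρ t)⁻¹ : ℝ) : ℂ)) t) :
    -- (1) each kernel function belongs to `H_{c,ρ}(I)`
    (∀ y ∈ insert c I, InH (kfun y) (kder y)) ∧
    -- (2) reproducing property: `f y = ⟨f, k_y⟩`
    (∀ f g, InH f g → ∀ y ∈ insert c I,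
      f y = ∫ t in I, g t * (starRingEnd ℂ) (kder y t) * (ρ t : ℂ)) ∧
    -- (3) point evaluations are bounded: `H_{c,ρ}(I)` is an RKHS on `I ∪ {c}`
    (∀ y ∈ insert c I, ∃ C : ℝ, ∀ f g, InH f g →
      ‖f y‖ ^ 2 ≤ C * ∫ t in I, ‖g t‖ ^ 2 * ρ t) :=
  stmt7_general a b c hca hcb ρ I hI hρpos hρint InH hInH kfun hkfun kder hkder
end

section
/- In the setting of the Sobolev-type space H_{c,ρ}(I): define φ : I → L²_ρ(I) by φ(x) = χ_{(c,x)}/ρ. Then the integral transform φ̂ : L²_ρ(I) → H_{c,ρ}(I), given by (φ̂ f)(x) = ∫_I f · (χ_{(c,x)}/ρ) · ρ dt = sign(x−c) ∫_c^x f dt, is a surjective isometry; in particular the family {χ_{(c,x)}/ρ : x ∈ I} has dense span in L²_ρ(I). -/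
/-! Since `χ_{(c,x)} / ρ · ρ = χ_{(c,x)}` on `I`, the transform of `f` is `x ↦ ∫_{(c,x)} f`, an
indefinite integral from `c` of `t ↦ sign (t - c) f t`, which has the same weighted norm as `f`;
conversely an element of `H_{c,ρ}(I)` with derivative `g` is the transform of
`t ↦ sign (t - c) g t`. For completeness, `|f| ≤ |f|² ρ + 1/ρ` makes `f ∈ L²_ρ` integrable on
each `(c,x)`; if `f` is orthogonal to every `χ_{(c,x)} / ρ`, its primitive vanishes on the open
interval `I`, so `f = 0` a.e. by the Lebesgue differentiation theorem. -/

open MeasureTheory Set intervalIntegral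

theorem ordConnected_insert_setOf_coe_mem_Ioo {a b : EReal} {c : ℝ} (hca : a ≤ c) (hcb : c ≤ b) :
    (insert c {x : ℝ | a < x ∧ x < b}).OrdConnected := by
  refine ⟨fun x hx y hy z hz => ?_⟩
  rcases eq_or_ne z c with rfl | hzc
  · exact mem_insert z _
  refine mem_insert_of_mem c ⟨?_, ?_⟩
  · rcases hx with rfl | hx
    · exact hca.trans_lt (EReal.coe_lt_coe_iff.2 (hz.1.lt_of_ne' hzc))
    · exact hx.1.trans_le (EReal.coe_le_coe_iff.2 hz.1)
  · rcases hy with rfl | hy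
    · exact (EReal.coe_lt_coe_iff.2 (hz.2.lt_of_ne hzc)).trans_le hcb
    · exact (EReal.coe_le_coe_iff.2 hz.2).trans_lt hy.2

theorem restrict_restrict_uIoc_of_ordConnected_insert {I : Set ℝ} {c x : ℝ}
    (hI : (insert c I).OrdConnected) (hx : x ∈ insert c I) :
    (volume.restrict I).restrict (Set.uIoc c x) = volume.restrict (Set.uIoc c x) := by
  rw [Measure.restrict_restrict measurableSet_uIoc]
  refine Measure.restrict_congr_set (Filter.inter_eventuallyEq_left.2 ?_)
  filter_upwards [Measure.ae_ne volume c] with t htc ht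
  exact (hI.uIcc_subset (mem_insert c I) hx (uIoc_subset_uIcc ht)).resolve_left htc

theorem ae_imp_of_forall_mem_nhds_ae_imp {α : Type*} [TopologicalSpace α]
    [SecondCountableTopology α] [MeasurableSpace α] {μ : Measure α} {s : Set α} {p : α → Prop}
    (h : ∀ x ∈ s, ∃ V ∈ nhds x, ∀ᵐ t ∂μ, t ∈ V → p t) : ∀ᵐ t ∂μ, t ∈ s → p t := by
  rw [ae_iff]
  refine measure_null_of_locally_null _ fun x hx => ?_
  obtain ⟨V, hV, hVp⟩ := h x (Classical.not_imp.1 hx).1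
  refine ⟨{t | ¬(t ∈ s → p t)} ∩ V, inter_mem_nhdsWithin _ hV, ?_⟩
  rw [ae_iff] at hVp
  exact measure_mono_null (fun t ht => Classical.not_imp.2 ⟨ht.2, (Classical.not_imp.1 ht.1).2⟩) hVp

theorem ae_restrict_eq_zero_of_intervalIntegral_eq_zero {E : Type*} [NormedAddCommGroup E]
    [NormedSpace ℝ E] [CompleteSpace E] {U : Set ℝ} (hU : IsOpen U) {c : ℝ} {f : ℝ → E}
    (hf : ∀ x ∈ U, IntervalIntegrable f volume c x) (h0 : ∀ x ∈ U, ∫ t in c..x, f t = 0) :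
    ∀ᵐ t ∂volume.restrict U, f t = 0 := by
  rw [ae_restrict_iff' hU.measurableSet]
  refine ae_imp_of_forall_mem_nhds_ae_imp fun x hx => ?_
  obtain ⟨u, v, hxuv, hnhds, huvU⟩ := exists_Icc_mem_subset_of_mem_nhds (hU.mem_nhds hx)
  have huv : u ≤ v := hxuv.1.trans hxuv.2
  have hu : u ∈ U := huvU (left_mem_Icc.2 huv)
  refine ⟨Icc u v, hnhds, ?_⟩
  filter_upwards [((hf u hu).symm.trans (hf v (huvU (right_mem_Icc.2 huv)))).ae_hasDerivAt_integral]
    with y hderiv hy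
  -- the primitive `z ↦ ∫ u..z, f` vanishes on the open set `U ∋ y`, so its derivative `f y` is `0`
  have hzero : (fun z => ∫ t in u..z, f t) =ᶠ[nhds y] fun _ => 0 := by
    filter_upwards [hU.mem_nhds (huvU hy)] with z hz
    rw [← integral_interval_sub_left (hf z hz) (hf u hu), h0 z hz, h0 u hu, sub_zero]
  rw [uIcc_of_le huv] at hderiv
  exact (hderiv hy u (left_mem_Icc.2 huv)).unique
    ((hasDerivAt_const y 0).congr_of_eventuallyEq hzero)

section WeightedL2

variable {α E : Type*} [MeasurableSpace α] [NormedAddCommGroup E] {ν : Measure α} {ρ : α → ℝ}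

theorem memLp_two_withDensity_iff (hρ : Measurable ρ) (hpos : ∀ᵐ t ∂ν, 0 < ρ t) {f : α → E} :
    MemLp f 2 (ν.withDensity fun t => ENNReal.ofReal (ρ t)) ↔
      AEStronglyMeasurable f ν ∧ Integrable (fun t => ‖f t‖ ^ 2 * ρ t) ν := by
  have hac : ν ≪ ν.withDensity fun t => ENNReal.ofReal (ρ t) :=
    withDensity_absolutelyContinuous' hρ.ennreal_ofReal.aemeasurable
      (hpos.mono fun t ht => ENNReal.ofReal_pos.2 ht |>.ne')
  have hmeas : AEStronglyMeasurable f (ν.withDensity fun t => ENNReal.ofReal (ρ t)) ↔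
      AEStronglyMeasurable f ν :=
    ⟨fun h => h.mono_ac hac, fun h => h.mono_ac (withDensity_absolutelyContinuous _ _)⟩
  have hsq : ∀ hf : AEStronglyMeasurable f (ν.withDensity fun t => ENNReal.ofReal (ρ t)),
      MemLp f 2 (ν.withDensity fun t => ENNReal.ofReal (ρ t)) ↔
        Integrable (fun t => ‖f t‖ ^ 2 * ρ t) ν := fun hf => by
    rw [memLp_two_iff_integrable_sq_norm hf, integrable_withDensity_iff hρ.ennreal_ofReal
      (ae_of_all _ fun t => ENNReal.ofReal_lt_top)]
    refine integrable_congr ?_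
    filter_upwards [hpos] with t ht
    rw [ENNReal.toReal_ofReal ht.le]
  exact ⟨fun h => ⟨hmeas.1 h.1, (hsq h.1).1 h⟩, fun ⟨hf, hi⟩ => (hsq (hmeas.2 hf)).2 hi⟩

theorem MeasureTheory.Integrable.of_norm_sq_mul {f : α → E} (hf : AEStronglyMeasurable f ν)
    (hfρ : Integrable (fun t => ‖f t‖ ^ 2 * ρ t) ν) (hρ : Integrable (fun t => (ρ t)⁻¹) ν)
    (hpos : ∀ᵐ t ∂ν, 0 < ρ t) : Integrable f ν := by
  refine (hfρ.add hρ).mono' hf ?_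
  filter_upwards [hpos] with t ht
  -- AM-GM: `2‖f‖ ≤ ‖f‖²ρ + ρ⁻¹`
  have hinv : (ρ t)⁻¹ * ρ t = 1 := inv_mul_cancel₀ ht.ne'
  simp only [Pi.add_apply]
  rw [← mul_le_mul_iff_of_pos_right ht]
  nlinarith [sq_nonneg (‖f t‖ * ρ t - 1), mul_nonneg (norm_nonneg (f t)) ht.le]

theorem integrableOn_of_memLp_two_withDensity (hρ : Measurable ρ) (hpos : ∀ᵐ t ∂ν, 0 < ρ t)
    {f : α → E} (hf : MemLp f 2 (ν.withDensity fun t => ENNReal.ofReal (ρ t))) {J : Set α}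
    (hJ : IntegrableOn (fun t => (ρ t)⁻¹) J ν) : IntegrableOn f J ν :=
  let ⟨hfm, hfi⟩ := (memLp_two_withDensity_iff hρ hpos).1 hf
  Integrable.of_norm_sq_mul hfm.restrict hfi.restrict hJ (ae_restrict_of_ae hpos)

theorem memLp_indicator_inv_withDensity (hρ : Measurable ρ) (hpos : ∀ᵐ t ∂ν, 0 < ρ t)
    {J : Set α} (hJ : MeasurableSet J) (hint : IntegrableOn (fun t => (ρ t)⁻¹) J ν) :
    MemLp (J.indicator fun t => (((ρ t)⁻¹ : ℝ) : ℂ)) 2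
      (ν.withDensity fun t => ENNReal.ofReal (ρ t)) := by
  refine (memLp_two_withDensity_iff hρ hpos).2
    ⟨((Complex.measurable_ofReal.comp hρ.inv).indicator hJ).aestronglyMeasurable, ?_⟩
  refine ((integrable_indicator_iff hJ).2 hint).congr ?_
  filter_upwards [hpos] with t ht
  by_cases htJ : t ∈ J
  · rw [indicator_of_mem htJ, indicator_of_mem htJ, Complex.norm_real,
      Real.norm_of_nonneg (inv_pos.2 ht).le]
    field_simp
  · simp [htJ]

theorem setIntegral_mul_conj_indicator_inv_mul {μ : Measure α} {I J : Set α}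
    (hI : MeasurableSet I) (hJ : MeasurableSet J) (hJI : (μ.restrict I).restrict J = μ.restrict J)
    (hpos : ∀ t ∈ I, 0 < ρ t) (f : α → ℂ) :
    ∫ t in I, f t * starRingEnd ℂ (J.indicator (fun t => (((ρ t)⁻¹ : ℝ) : ℂ)) t) * (ρ t : ℂ) ∂μ
      = ∫ t in J, f t ∂μ := by
  have hcancel : EqOn
      (fun t => f t * starRingEnd ℂ (J.indicator (fun t => (((ρ t)⁻¹ : ℝ) : ℂ)) t) * (ρ t : ℂ))
      (J.indicator f) I := by
    intro t ht
    by_cases htJ : t ∈ J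
    · simp [htJ, (hpos t ht).ne']
    · simp [htJ]
  rw [setIntegral_congr_fun hI hcancel, MeasureTheory.integral_indicator hJ, hJI]

end WeightedL2

section FlipBelow

variable {E : Type*} [NormedAddCommGroup E]

-- `t ↦ sign (t - c) f t` with `sign 0 = 1`
noncomputable def flipBelow (c : ℝ) (f : ℝ → E) : ℝ → E := fun t => if c ≤ t then f t else -f t

variable {c : ℝ} {f : ℝ → E}

@[simp]
theorem norm_flipBelow (t : ℝ) : ‖flipBelow c f t‖ = ‖f t‖ := by
  unfold flipBelow; split_ifs <;> simp

@[simp]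
theorem flipBelow_flipBelow : flipBelow c (flipBelow c f) = f := by
  funext t; unfold flipBelow; split_ifs <;> simp

theorem MeasureTheory.AEStronglyMeasurable.flipBelow {μ : Measure ℝ}
    (hf : AEStronglyMeasurable f μ) : AEStronglyMeasurable (flipBelow c f) μ :=
  (hf.restrict.piecewise measurableSet_Ici hf.neg.restrict :
    AEStronglyMeasurable ((Ici c).piecewise f (-f)) μ)

theorem MeasureTheory.MemLp.flipBelow {p : ENNReal} {μ : Measure ℝ} (hf : MemLp f p μ) :
    MemLp (flipBelow c f) p μ :=
  hf.congr_norm hf.1.flipBelow (ae_of_all _ fun t => (norm_flipBelow t).symm)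

theorem setIntegral_uIoc_flipBelow [NormedSpace ℝ E] (x : ℝ) :
    ∫ t in Set.uIoc c x, flipBelow c f t = ∫ t in c..x, f t := by
  rcases le_or_gt c x with hcx | hxc
  · rw [uIoc_of_le hcx, integral_of_le hcx]
    exact setIntegral_congr_fun measurableSet_Ioc fun t ht => if_pos ht.1.le
  · rw [uIoc_of_ge hxc.le, integral_of_ge hxc.le, ← MeasureTheory.integral_neg]
    refine setIntegral_congr_ae measurableSet_Ioc ?_
    filter_upwards [Measure.ae_ne volume c] with t htc ht
    exact if_neg (not_le.2 (ht.2.lt_of_ne htc))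

end FlipBelow

theorem stmt8_general (a b : EReal) (c : ℝ)
    (hca : a ≤ (c : EReal)) (hcb : (c : EReal) ≤ b)
    (ρ : ℝ → ℝ)
    (I : Set ℝ) (hI : I = {x : ℝ | a < (x : EReal) ∧ (x : EReal) < b})
    (hρpos : ∀ t ∈ I, 0 < ρ t) (hρmeas : Measurable ρ)
    (hρint : ∀ x ∈ I, IntegrableOn (fun t => (ρ t)⁻¹) (Set.uIoc c x))
    (μ : Measure ℝ)
    (hμ : μ = (volume.restrict I).withDensity (fun t => ENNReal.ofReal (ρ t)))
    (InH : (ℝ → ℂ) → (ℝ → ℂ) → Prop)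
    (hInH : ∀ f g, InH f g ↔
      (AEStronglyMeasurable g (volume.restrict I) ∧
       IntegrableOn (fun t => ‖g t‖ ^ 2 * ρ t) I ∧
       ∀ x ∈ insert c I, f x = ∫ t in c..x, g t))
    (φ : ℝ → ℝ → ℂ)
    (hφ : ∀ x, φ x = (Set.uIoc c x).indicator (fun t => (((ρ t)⁻¹ : ℝ) : ℂ))) :
    -- (1) `φ x ∈ L²_ρ(I)`
    (∀ x ∈ I, MemLp (φ x) 2 μ) ∧
    -- (2) the integral transform, membership and isometry
    (∀ f : ℝ → ℂ, MemLp f 2 μ →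
      (∀ x ∈ insert c I,
        (∫ t in I, f t * (starRingEnd ℂ) (φ x t) * (ρ t : ℂ)) = ∫ t in Set.uIoc c x, f t) ∧
      InH (fun x => ∫ t in Set.uIoc c x, f t) (fun t => if c ≤ t then f t else -f t) ∧
      (∫ t in I, ‖(if c ≤ t then f t else -f t)‖ ^ 2 * ρ t) = ∫ t in I, ‖f t‖ ^ 2 * ρ t) ∧
    -- (3) surjectivity onto `H_{c,ρ}(I)`
    (∀ f g, InH f g → ∃ h : ℝ → ℂ, MemLp h 2 μ ∧
      ∀ x ∈ insert c I, (∫ t in Set.uIoc c x, h t) = f x) ∧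
    -- (4) completeness of the family `φ(I)` in `L²_ρ(I)`
    (∀ f : ℝ → ℂ, MemLp f 2 μ →
      (∀ x ∈ I, (∫ t in I, f t * (starRingEnd ℂ) (φ x t) * (ρ t : ℂ)) = 0) →
      ∀ᵐ t ∂μ, f t = 0) := by
  subst hμ
  have hIopen : IsOpen I := hI ▸ isOpen_Ioo.preimage continuous_coe_real_ereal
  have hconn : (insert c I).OrdConnected := hI ▸ ordConnected_insert_setOf_coe_mem_Ioo hca hcb
  have hpos : ∀ᵐ t ∂volume.restrict I, 0 < ρ t :=
    ae_restrict_of_forall_mem hIopen.measurableSet hρpos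
  have htransform (f : ℝ → ℂ) (x : ℝ) (hx : x ∈ insert c I) :
      ∫ t in I, f t * starRingEnd ℂ (φ x t) * (ρ t : ℂ) = ∫ t in Set.uIoc c x, f t := by
    rw [hφ]
    exact setIntegral_mul_conj_indicator_inv_mul hIopen.measurableSet measurableSet_uIoc
      (restrict_restrict_uIoc_of_ordConnected_insert hconn hx) hρpos f
  refine ⟨fun x hx => ?_, fun f hf => ?_, fun f g hfg => ?_, fun f hf horth => ?_⟩
  · rw [hφ]
    exact memLp_indicator_inv_withDensity hρmeas hpos measurableSet_uIoc (hρint x hx).restrict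
  · obtain ⟨hfm, hfi⟩ := (memLp_two_withDensity_iff hρmeas hpos).1 hf.flipBelow
    refine ⟨htransform f, (hInH _ _).2 ⟨hfm, hfi, fun x _ => ?_⟩, ?_⟩
    · change _ = ∫ t in c..x, flipBelow c f t
      rw [← setIntegral_uIoc_flipBelow, flipBelow_flipBelow]
    · change ∫ t in I, ‖flipBelow c f t‖ ^ 2 * ρ t = _
      simp only [norm_flipBelow]
  · obtain ⟨hgm, hgi, hfg⟩ := (hInH f g).1 hfg
    exact ⟨flipBelow c g, ((memLp_two_withDensity_iff hρmeas hpos).2 ⟨hgm, hgi⟩).flipBelow,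
      fun x hx => (setIntegral_uIoc_flipBelow x).trans (hfg x hx).symm⟩
  · refine (withDensity_absolutelyContinuous _ _).ae_le
      (ae_restrict_eq_zero_of_intervalIntegral_eq_zero hIopen (c := c) (fun x hx => ?_)
        fun x hx => ?_)
    · have hfx := integrableOn_of_memLp_two_withDensity hρmeas hpos hf (hρint x hx).restrict
      rw [IntegrableOn, restrict_restrict_uIoc_of_ordConnected_insert hconn
        (mem_insert_of_mem c hx)] at hfx
      exact intervalIntegrable_iff.2 hfx
    · rw [intervalIntegral_eq_integral_uIoc, ← htransform f x (mem_insert_of_mem c hx),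
        horth x hx, smul_zero]

theorem stmt8 (a b : EReal) (hab : a < b) (c : ℝ)
    (hca : a ≤ (c : EReal)) (hcb : (c : EReal) ≤ b)
    (ρ : ℝ → ℝ)
    (I : Set ℝ) (hI : I = {x : ℝ | a < (x : EReal) ∧ (x : EReal) < b})
    (hρpos : ∀ t ∈ I, 0 < ρ t) (hρmeas : Measurable ρ)
    (hρint : ∀ x ∈ I, IntegrableOn (fun t => (ρ t)⁻¹) (Set.uIoc c x))
    (μ : Measure ℝ)
    (hμ : μ = (volume.restrict I).withDensity (fun t => ENNReal.ofReal (ρ t)))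
    (InH : (ℝ → ℂ) → (ℝ → ℂ) → Prop)
    (hInH : ∀ f g, InH f g ↔
      (AEStronglyMeasurable g (volume.restrict I) ∧
       IntegrableOn (fun t => ‖g t‖ ^ 2 * ρ t) I ∧
       ∀ x ∈ insert c I, f x = ∫ t in c..x, g t))
    (φ : ℝ → ℝ → ℂ)
    (hφ : ∀ x, φ x = (Set.uIoc c x).indicator (fun t => (((ρ t)⁻¹ : ℝ) : ℂ))) :
    -- (1) `φ x ∈ L²_ρ(I)`
    (∀ x ∈ I, MemLp (φ x) 2 μ) ∧
    -- (2) the integral transform, membership and isometry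
    (∀ f : ℝ → ℂ, MemLp f 2 μ →
      (∀ x ∈ insert c I,
        (∫ t in I, f t * (starRingEnd ℂ) (φ x t) * (ρ t : ℂ)) = ∫ t in Set.uIoc c x, f t) ∧
      InH (fun x => ∫ t in Set.uIoc c x, f t) (fun t => if c ≤ t then f t else -f t) ∧
      (∫ t in I, ‖(if c ≤ t then f t else -f t)‖ ^ 2 * ρ t) = ∫ t in I, ‖f t‖ ^ 2 * ρ t) ∧
    -- (3) surjectivity onto `H_{c,ρ}(I)`
    (∀ f g, InH f g → ∃ h : ℝ → ℂ, MemLp h 2 μ ∧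
      ∀ x ∈ insert c I, (∫ t in Set.uIoc c x, h t) = f x) ∧
    -- (4) completeness of the family `φ(I)` in `L²_ρ(I)`
    (∀ f : ℝ → ℂ, MemLp f 2 μ →
      (∀ x ∈ I, (∫ t in I, f t * (starRingEnd ℂ) (φ x t) * (ρ t : ℂ)) = 0) →
      ∀ᵐ t ∂μ, f t = 0) :=
  stmt8_general a b c hca hcb ρ I hI hρpos hρmeas hρint μ hμ InH hInH φ hφ
end
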